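/- Let S : [0,∞) → (0,∞) be differentiable with S' = −σ S V, where σ > 0 is constant and V : [0,∞) → ℝ is continuous, nonnegative, and ∫₀^∞ V(t) dt < ∞. Then U(t) := S(t) − ln S(t) satisfies U'(t) ≤ σ V(t)(1 − S(t)) ≤ σ V(t)·max{1, S(0)}, and in particular U is bounded on [0,∞), hence inf_{t≥0} S(t) > 0. -/

import Mathlib

/-!
Along the flow, `U = S - log S` has derivative `(1 - 1/S) S' = σ V (1 - S) ≤ σ V max{1, S 0}`,
so `U t ≤ U 0 + σ max{1, S 0} ∫₀^∞ V`. Since `log S ≥ S - U ≥ -U`, a bound on `U` keeps `S`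
above `exp (-sup U) > 0`.
-/

open MeasureTheory Set

theorem HasDerivAt.sub_log {f : ℝ → ℝ} {f' x : ℝ} (hf : HasDerivAt f f' x) (hx : f x ≠ 0) :
    HasDerivAt (fun s => f s - Real.log (f s)) (f' * (1 - 1 / f x)) x :=
  (hf.sub (hf.log hx)).congr_deriv (by ring)

theorem intervalIntegral_le_setIntegral_Ici {V : ℝ → ℝ} {a t : ℝ} (hat : a ≤ t)
    (hV_nonneg : ∀ s ≥ a, 0 ≤ V s) (hV_int : IntegrableOn V (Ici a)) :
    ∫ s in a..t, V s ≤ ∫ s in Ici a, V s := by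
  rw [intervalIntegral.integral_of_le hat]
  refine setIntegral_mono_set hV_int ?_ (Ioc_subset_Icc_self.trans Icc_subset_Ici_self).eventuallyLE
  filter_upwards [self_mem_ae_restrict measurableSet_Ici] with s hs using hV_nonneg s hs

theorem le_add_mul_setIntegral_Ici_of_hasDerivAt_le {f f' V : ℝ → ℝ} {a K : ℝ} (hK : 0 ≤ K)
    (hf : ∀ t ≥ a, HasDerivAt f (f' t) t) (hf' : ∀ t ≥ a, f' t ≤ K * V t)
    (hV_nonneg : ∀ t ≥ a, 0 ≤ V t) (hV_int : IntegrableOn V (Ici a)) {t : ℝ} (hat : a ≤ t) :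
    f t ≤ f a + K * ∫ s in Ici a, V s := by
  have hFTC : f t - f a ≤ ∫ s in a..t, K * V s :=
    intervalIntegral.sub_le_integral_of_hasDeriv_right_of_le hat
      (fun x hx => (hf x hx.1).continuousAt.continuousWithinAt)
      (fun x hx => (hf x hx.1.le).hasDerivWithinAt)
      ((hV_int.mono_set Icc_subset_Ici_self).const_mul K) (fun x hx => hf' x hx.1.le)
  calc f t ≤ f a + K * ∫ s in a..t, V s := by
        rw [← intervalIntegral.integral_const_mul]; linarith
    _ ≤ f a + K * ∫ s in Ici a, V s := by
        gcongr; exact intervalIntegral_le_setIntegral_Ici hat hV_nonneg hV_int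

theorem Real.exp_neg_le_of_sub_log_le {x C : ℝ} (hx : 0 < x) (h : x - Real.log x ≤ C) :
    Real.exp (-C) ≤ x := by
  rw [← Real.le_log_iff_exp_le hx]
  linarith

theorem stmt_17_general (σ : ℝ) (hσ : 0 < σ) (S V : ℝ → ℝ)
    (hS_pos : ∀ t ≥ (0 : ℝ), 0 < S t)
    (hode : ∀ t ≥ (0 : ℝ), HasDerivAt S (-σ * S t * V t) t)
    (hV_nonneg : ∀ t ≥ (0 : ℝ), 0 ≤ V t)
    (hV_int : IntegrableOn V (Set.Ici 0)) :
    (∀ t ≥ (0 : ℝ),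
      deriv (fun s => S s - Real.log (S s)) t ≤ σ * V t * (1 - S t) ∧
      σ * V t * (1 - S t) ≤ σ * V t * max 1 (S 0)) ∧
    (∃ C : ℝ, ∀ t ≥ (0 : ℝ), S t - Real.log (S t) ≤ C) ∧
    (∃ ε > (0 : ℝ), ∀ t ≥ (0 : ℝ), ε ≤ S t) := by
  set M := max 1 (S 0)
  have hU : ∀ t ≥ (0 : ℝ), HasDerivAt (fun s => S s - Real.log (S s)) (σ * V t * (1 - S t)) t := by
    intro t ht
    refine ((hode t ht).sub_log (hS_pos t ht).ne').congr_deriv ?_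
    field_simp [(hS_pos t ht).ne']
    ring
  have hU' : ∀ t ≥ (0 : ℝ), σ * V t * (1 - S t) ≤ σ * V t * M := fun t ht =>
    mul_le_mul_of_nonneg_left (by linarith [hS_pos t ht, le_max_left 1 (S 0)])
      (mul_nonneg hσ.le (hV_nonneg t ht))
  have hUbdd : ∀ t ≥ (0 : ℝ), S t - Real.log (S t) ≤
      S 0 - Real.log (S 0) + σ * M * ∫ s in Ici 0, V s := fun t ht =>
    le_add_mul_setIntegral_Ici_of_hasDerivAt_le (by positivity) hU
      (fun t ht => (hU' t ht).trans_eq (by ring)) hV_nonneg hV_int ht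
  exact ⟨fun t ht => ⟨(hU t ht).deriv.le, hU' t ht⟩, ⟨_, hUbdd⟩, ⟨_, Real.exp_pos _,
    fun t ht => Real.exp_neg_le_of_sub_log_le (hS_pos t ht) (hUbdd t ht)⟩⟩

theorem stmt_17 (σ : ℝ) (hσ : 0 < σ) (S V : ℝ → ℝ)
    (hS_pos : ∀ t ≥ (0 : ℝ), 0 < S t)
    (hS_diff : Differentiable ℝ S)
    (hode : ∀ t ≥ (0 : ℝ), HasDerivAt S (-σ * S t * V t) t)
    (hV_cont : Continuous V)
    (hV_nonneg : ∀ t ≥ (0 : ℝ), 0 ≤ V t)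
    (hV_int : IntegrableOn V (Set.Ici 0)) :
    (∀ t ≥ (0 : ℝ),
      deriv (fun s => S s - Real.log (S s)) t ≤ σ * V t * (1 - S t) ∧
      σ * V t * (1 - S t) ≤ σ * V t * max 1 (S 0)) ∧
    (∃ C : ℝ, ∀ t ≥ (0 : ℝ), S t - Real.log (S t) ≤ C) ∧
    (∃ ε > (0 : ℝ), ∀ t ≥ (0 : ℝ), ε ≤ S t) :=
  stmt_17_general σ hσ S V hS_pos hode hV_nonneg hV_int
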